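/- arXiv:2205.10836 — 2 statements merged into one kernel-verified Lean document; each statement's English description precedes it below -/
import Mathlib

section
/- Let n >= 3 and let 0 < eps < 1/(6n). Consider the fair-chores instance with n agents and n + 2 chores e_1, ..., e_{n+2} where: agent 1 has v_1(e_1) = -1/n, v_1(e_2) = v_1(e_3) = -eps, v_1(e_4) = v_1(e_5) = -1/n + eps, and v_1(e_j) = -1/n for 6 <= j <= n+2; and every agent i >= 2 has v_i(e_1) = v_i(e_3) = -1/2 and v_i(e_j) = 0 for all other j. Then OPT_E >= -1/n - 2*eps, while every connected MMS allocation A satisfies EW(A) <= -1/2. Hence the price of MMS with respect to egalitarian welfare for chores is at least (1/2)/(1/n + 2*eps), which tends to n/2 as eps tends to 0. -/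
open Finset

noncomputable section

/-- The value of a bundle `S` of items under additive (item-level) valuation `v`. -/
def bundleVal {m : ℕ} (v : Fin m → ℝ) (S : Finset (Fin m)) : ℝ := ∑ e ∈ S, v e

/-- A bundle is connected if it is an interval of the line `e_1, …, e_m`. -/
def IsConnBundle {m : ℕ} (S : Finset (Fin m)) : Prop :=
  ∀ a ∈ S, ∀ c ∈ S, ∀ b : Fin m, a ≤ b → b ≤ c → b ∈ S

/-- A connected allocation: pairwise disjoint connected bundles covering all items. -/
def ConnAlloc (n m : ℕ) (A : Fin n → Finset (Fin m)) : Prop :=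
  (∀ i, IsConnBundle (A i)) ∧
  (∀ i j : Fin n, i ≠ j → Disjoint (A i) (A j)) ∧
  (∀ e : Fin m, ∃ i, e ∈ A i)

/-- The maximin share of an agent with valuation `v`: the maximum over connected
`n`-partitions of the minimum bundle value. -/
def mmsVal (n m : ℕ) (v : Fin m → ℝ) : ℝ :=
  sSup { x : ℝ | ∃ A : Fin n → Finset (Fin m), ConnAlloc n m A ∧ x = ⨅ j, bundleVal v (A j) }

/-- Utilitarian welfare of an allocation. -/
def utilW (n m : ℕ) (v : Fin n → Fin m → ℝ) (A : Fin n → Finset (Fin m)) : ℝ :=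
  ∑ i, bundleVal (v i) (A i)

/-- Egalitarian welfare of an allocation. -/
def egalW (n m : ℕ) (v : Fin n → Fin m → ℝ) (A : Fin n → Finset (Fin m)) : ℝ :=
  ⨅ i, bundleVal (v i) (A i)

/-- Optimal utilitarian welfare over all connected allocations. -/
def optU (n m : ℕ) (v : Fin n → Fin m → ℝ) : ℝ :=
  sSup { x : ℝ | ∃ A, ConnAlloc n m A ∧ x = utilW n m v A }

/-- Optimal egalitarian welfare over all connected allocations. -/
def optE (n m : ℕ) (v : Fin n → Fin m → ℝ) : ℝ :=
  sSup { x : ℝ | ∃ A, ConnAlloc n m A ∧ x = egalW n m v A }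


/-- Auxiliary: allocation given by intervals `[f i, g i]` of item indices. -/
def intervalAlloc (n m : ℕ) (f g : ℕ → ℕ) : Fin n → Finset (Fin m) :=
  fun i => Finset.univ.filter (fun e => f (i : ℕ) ≤ (e : ℕ) ∧ (e : ℕ) ≤ g (i : ℕ))

lemma mem_intervalAlloc {n m : ℕ} {f g : ℕ → ℕ} {i : Fin n} {e : Fin m} :
    e ∈ intervalAlloc n m f g i ↔ f (i : ℕ) ≤ (e : ℕ) ∧ (e : ℕ) ≤ g (i : ℕ) := by
  simp [intervalAlloc]

lemma intervalAlloc_conn (n m : ℕ) (f g : ℕ → ℕ)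
    (hsep : ∀ i j : ℕ, i < j → j < n → g i < f j)
    (hcov : ∀ k, k < m → ∃ i, i < n ∧ f i ≤ k ∧ k ≤ g i) :
    ConnAlloc n m (intervalAlloc n m f g) := by
  refine ⟨fun i a ha c hc b hab hbc => ?_, fun i j hij => ?_, fun e => ?_⟩
  · rw [mem_intervalAlloc] at ha hc ⊢
    exact ⟨ha.1.trans (Fin.le_def.mp hab), (Fin.le_def.mp hbc).trans hc.2⟩
  · rw [Finset.disjoint_left]
    intro e he he'
    rw [mem_intervalAlloc] at he he'
    have hij' : (i : ℕ) ≠ (j : ℕ) := fun h => hij (Fin.ext h)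
    rcases hij'.lt_or_gt with h | h
    · have := hsep _ _ h j.isLt; omega
    · have := hsep _ _ h i.isLt; omega
  · obtain ⟨i, hi, h1, h2⟩ := hcov e e.isLt
    exact ⟨⟨i, hi⟩, mem_intervalAlloc.mpr ⟨h1, h2⟩⟩

lemma bundleVal_mono {m : ℕ} {v : Fin m → ℝ} (hv : ∀ e, v e ≤ 0)
    {S T : Finset (Fin m)} (hTS : T ⊆ S) : bundleVal v S ≤ bundleVal v T := by
  unfold bundleVal
  rw [← Finset.sum_sdiff hTS]
  have h : ∑ e ∈ S \ T, v e ≤ 0 := Finset.sum_nonpos (fun e _ => hv e)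
  linarith

lemma bundleVal_nonpos {m : ℕ} {v : Fin m → ℝ} (hv : ∀ e, v e ≤ 0)
    (S : Finset (Fin m)) : bundleVal v S ≤ 0 :=
  Finset.sum_nonpos (fun e _ => hv e)

lemma bundleVal_single {m c : ℕ} (hc : c < m) (v : Fin m → ℝ) :
    bundleVal v (Finset.univ.filter (fun e : Fin m => c ≤ (e : ℕ) ∧ (e : ℕ) ≤ c))
      = v ⟨c, hc⟩ := by
  have hs : (Finset.univ.filter (fun e : Fin m => c ≤ (e : ℕ) ∧ (e : ℕ) ≤ c))
      = {⟨c, hc⟩} := by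
    ext e; simp [Fin.ext_iff]; omega
  rw [bundleVal, hs, Finset.sum_singleton]

lemma bundleVal_pair {m c : ℕ} (hc : c + 1 < m) (v : Fin m → ℝ) :
    bundleVal v (Finset.univ.filter (fun e : Fin m => c ≤ (e : ℕ) ∧ (e : ℕ) ≤ c + 1))
      = v ⟨c, by omega⟩ + v ⟨c + 1, hc⟩ := by
  have hs : (Finset.univ.filter (fun e : Fin m => c ≤ (e : ℕ) ∧ (e : ℕ) ≤ c + 1))
      = {⟨c, by omega⟩, ⟨c + 1, hc⟩} := by
    ext e; simp [Fin.ext_iff]; omega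
  rw [bundleVal, hs, Finset.sum_pair (by simp [Fin.ext_iff])]

lemma bundleVal_triple {m : ℕ} (hm : 2 < m) (v : Fin m → ℝ) :
    bundleVal v (Finset.univ.filter (fun e : Fin m => 0 ≤ (e : ℕ) ∧ (e : ℕ) ≤ 2))
      = v ⟨0, by omega⟩ + v ⟨1, by omega⟩ + v ⟨2, hm⟩ := by
  have hs : (Finset.univ.filter (fun e : Fin m => 0 ≤ (e : ℕ) ∧ (e : ℕ) ≤ 2))
      = {⟨0, by omega⟩, ⟨1, by omega⟩, ⟨2, hm⟩} := by
    ext e; simp [Fin.ext_iff]; omega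
  rw [bundleVal, hs, Finset.sum_insert (by simp [Fin.ext_iff]),
    Finset.sum_pair (by simp [Fin.ext_iff])]
  ring

def fA (k : ℕ) : ℕ := if k = 0 then 0 else k + 2
def gA (k : ℕ) : ℕ := if k = 0 then 2 else k + 2
def fB (k : ℕ) : ℕ := if k = 0 then 0 else if k = 1 then 2 else k + 2
def gB (k : ℕ) : ℕ := if k = 0 then 1 else if k = 1 then 3 else k + 2


/-- The hard instance for Chores | Egalitarian | MMS: with `n ≥ 3`
agents, `n + 2` chores and small `ε > 0` as described, `OPT_E ≥ -1/n - 2ε`, while every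
connected MMS allocation has egalitarian welfare at most `-1/2`. -/
theorem chores_egalitarian_mms_lower_bound (n : ℕ) (hn : 3 ≤ n)
    (eps : ℝ) (heps0 : 0 < eps) (heps1 : eps < 1 / (6 * (n : ℝ)))
    (v : Fin n → Fin (n + 2) → ℝ)
    (hv1 : ∀ i : Fin n, (i : ℕ) = 0 → ∀ j : Fin (n + 2),
      v i j = if (j : ℕ) = 0 then -(1 / (n : ℝ))
              else if (j : ℕ) = 1 ∨ (j : ℕ) = 2 then -eps
              else if (j : ℕ) = 3 ∨ (j : ℕ) = 4 then -(1 / (n : ℝ)) + eps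
              else -(1 / (n : ℝ)))
    (hv2 : ∀ i : Fin n, (i : ℕ) ≠ 0 → ∀ j : Fin (n + 2),
      v i j = if (j : ℕ) = 0 ∨ (j : ℕ) = 2 then -(1 / 2 : ℝ) else 0) :
    -(1 / (n : ℝ)) - 2 * eps ≤ optE n (n + 2) v ∧
    ∀ A : Fin n → Finset (Fin (n + 2)), ConnAlloc n (n + 2) A →
      (∀ i, mmsVal n (n + 2) (v i) ≤ bundleVal (v i) (A i)) →
      egalW n (n + 2) v A ≤ -(1 / 2 : ℝ) := by
  have hnR : (0:ℝ) < (n : ℝ) := by exact_mod_cast Nat.pos_of_ne_zero (by omega)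
  have h6 : (0:ℝ) < 6 * (n : ℝ) := by positivity
  have hepsn : eps ≤ 1 / (n : ℝ) := by
    rw [lt_div_iff₀ h6] at heps1
    rw [le_div_iff₀ hnR]
    nlinarith
  haveI : Nonempty (Fin n) := ⟨⟨0, by omega⟩⟩
  have hvle : ∀ i j, v i j ≤ 0 := by
    intro i j
    by_cases hi : (i : ℕ) = 0
    · rw [hv1 i hi j]
      have h1n : 0 < 1 / (n : ℝ) := by positivity
      split_ifs <;> linarith
    · rw [hv2 i hi j]
      split_ifs <;> norm_num
  -- lower bound on the MMS value of agent 0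
  have hmmslb : ∀ i : Fin n, (i : ℕ) = 0 → -(1 / (n : ℝ)) - eps ≤ mmsVal n (n + 2) (v i) := by
    intro i hi
    have hbdd : BddAbove {x : ℝ | ∃ A : Fin n → Finset (Fin (n + 2)),
        ConnAlloc n (n + 2) A ∧ x = ⨅ j, bundleVal (v i) (A j)} := by
      refine ⟨0, ?_⟩
      rintro x ⟨A, hA, rfl⟩
      exact le_trans (ciInf_le (Finite.bddBelow_range _) ⟨0, by omega⟩)
        (bundleVal_nonpos (hvle i) _)
    set B := intervalAlloc n (n + 2) fB gB with hBdef
    have hconn : ConnAlloc n (n + 2) B := by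
      apply intervalAlloc_conn
      · intro a b hab hbn; unfold fB gB; split_ifs <;> omega
      · intro k hk
        rcases Nat.lt_or_ge k 2 with h | h
        · exact ⟨0, by omega, by simp [fB], by simp [gB]; omega⟩
        rcases Nat.lt_or_ge k 4 with h' | h'
        · exact ⟨1, by omega, by simp [fB]; omega, by simp [gB]; omega⟩
        · have h0 : ¬(k - 2 = 0) := by omega
          have h1 : ¬(k - 2 = 1) := by omega
          exact ⟨k - 2, by omega, by simp [fB, h0, h1]; omega, by simp [gB, h0, h1]; omega⟩
    refine le_csSup_of_le hbdd ⟨B, hconn, rfl⟩ (le_ciInf fun j => ?_)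
    rcases Nat.lt_or_ge (j : ℕ) 1 with hj | hj
    · have hBj : B j = Finset.univ.filter
          (fun e : Fin (n + 2) => 0 ≤ (e : ℕ) ∧ (e : ℕ) ≤ 0 + 1) := by
        have hj0 : (j : ℕ) = 0 := by omega
        simp [hBdef, intervalAlloc, hj0, fB, gB]
      rw [hBj, bundleVal_pair (by omega)]
      simp only [hv1 i hi]
      norm_num
      try linarith
    rcases Nat.lt_or_ge (j : ℕ) 2 with hj2 | hj2
    · have hBj : B j = Finset.univ.filter
          (fun e : Fin (n + 2) => 2 ≤ (e : ℕ) ∧ (e : ℕ) ≤ 2 + 1) := by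
        have hj1 : (j : ℕ) = 1 := by omega
        simp [hBdef, intervalAlloc, hj1, fB, gB]
      rw [hBj, bundleVal_pair (by omega)]
      simp only [hv1 i hi]
      norm_num
      try linarith
    · have hBj : B j = Finset.univ.filter
          (fun e : Fin (n + 2) => (j : ℕ) + 2 ≤ (e : ℕ) ∧ (e : ℕ) ≤ (j : ℕ) + 2) := by
        have h0 : (j : ℕ) ≠ 0 := by omega
        have h1 : (j : ℕ) ≠ 1 := by omega
        simp [hBdef, intervalAlloc, fB, gB, h0, h1]
      rw [hBj, bundleVal_single (by omega)]
      rw [hv1 i hi]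
      simp only [Fin.val_mk]
      split_ifs <;> first | omega | linarith
  constructor
  · -- Part 1: optE ≥ -1/n - 2 eps
    set A := intervalAlloc n (n + 2) fA gA with hAdef
    have hconn : ConnAlloc n (n + 2) A := by
      apply intervalAlloc_conn
      · intro a b hab hbn; unfold fA gA; split_ifs <;> omega
      · intro k hk
        rcases Nat.lt_or_ge k 3 with h | h
        · exact ⟨0, by omega, by simp [fA], by simp [gA]; omega⟩
        · have h0 : ¬(k - 2 = 0) := by omega
          exact ⟨k - 2, by omega, by simp [fA, h0]; omega, by simp [gA, h0]; omega⟩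
    have hbdd : BddAbove {x : ℝ | ∃ A, ConnAlloc n (n + 2) A ∧ x = egalW n (n + 2) v A} := by
      refine ⟨0, ?_⟩
      rintro x ⟨A', hA', rfl⟩
      exact le_trans (ciInf_le (Finite.bddBelow_range _) ⟨0, by omega⟩)
        (bundleVal_nonpos (hvle _) _)
    refine le_csSup_of_le hbdd ⟨A, hconn, rfl⟩ (le_ciInf fun i => ?_)
    by_cases hi : (i : ℕ) = 0
    · have hAi : A i = Finset.univ.filter
          (fun e : Fin (n + 2) => 0 ≤ (e : ℕ) ∧ (e : ℕ) ≤ 2) := by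
        simp [hAdef, intervalAlloc, hi, fA, gA]
      rw [hAi, bundleVal_triple (by omega)]
      simp only [hv1 i hi]
      norm_num
      try linarith
    · have hAi : A i = Finset.univ.filter
          (fun e : Fin (n + 2) => (i : ℕ) + 2 ≤ (e : ℕ) ∧ (e : ℕ) ≤ (i : ℕ) + 2) := by
        simp [hAdef, intervalAlloc, fA, gA, hi]
      rw [hAi, bundleVal_single (by omega)]
      rw [hv2 i hi]
      have h1n : 0 < 1 / (n : ℝ) := by positivity
      simp only [Fin.val_mk]
      rw [if_neg (by omega)]
      linarith
  · -- Part 2: every connected MMS allocation has egalW ≤ -1/2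
    intro A hA hmms
    obtain ⟨i1, hi1⟩ := hA.2.2 ⟨0, by omega⟩
    obtain ⟨i3, hi3⟩ := hA.2.2 ⟨2, by omega⟩
    have key : ∃ i : Fin n, bundleVal (v i) (A i) ≤ -(1 / 2 : ℝ) := by
      by_cases h1 : (i1 : ℕ) = 0
      · by_cases h3 : (i3 : ℕ) = 0
        · exfalso
          have hii : i1 = i3 := Fin.ext (by rw [h1, h3])
          have h2in : (⟨1, by omega⟩ : Fin (n + 2)) ∈ A i1 :=
            hA.1 i1 _ hi1 _ (hii ▸ hi3) _ (by simp [Fin.le_def]) (by simp [Fin.le_def])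
          have hsub : ({⟨0, by omega⟩, ⟨1, by omega⟩, ⟨2, by omega⟩} :
              Finset (Fin (n + 2))) ⊆ A i1 := by
            rw [Finset.insert_subset_iff, Finset.insert_subset_iff,
              Finset.singleton_subset_iff]
            exact ⟨hi1, h2in, hii ▸ hi3⟩
          have hle : bundleVal (v i1) (A i1) ≤ -(1 / (n : ℝ)) - 2 * eps := by
            refine le_trans (bundleVal_mono (hvle i1) hsub) ?_
            rw [bundleVal, Finset.sum_insert (by simp [Fin.ext_iff]),
              Finset.sum_pair (by simp [Fin.ext_iff])]
            simp only [hv1 i1 h1]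
            norm_num
            try linarith
          have h1' := hmms i1
          have h2' := hmmslb i1 h1
          linarith
        · refine ⟨i3, ?_⟩
          refine le_trans (bundleVal_mono (hvle i3) (Finset.singleton_subset_iff.mpr hi3)) ?_
          rw [bundleVal, Finset.sum_singleton, hv2 i3 h3]
          norm_num
      · refine ⟨i1, ?_⟩
        refine le_trans (bundleVal_mono (hvle i1) (Finset.singleton_subset_iff.mpr hi1)) ?_
        rw [bundleVal, Finset.sum_singleton, hv2 i1 h1]
        norm_num
    obtain ⟨i, hi⟩ := key
    exact le_trans (ciInf_le (Finite.bddBelow_range _) i) hi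
end
end

section
/- Let n >= 4 be an even integer. Consider the fair-chores instance with n agents and n + 1 chores e_1, ..., e_{n+1} where: agent 1 has v_1(e_j) = -2/n^2 for 1 <= j <= n and v_1(e_{n+1}) = -(n-2)/n; and every agent i >= 2 has v_i(e_j) = -1/(n+1) for all j. Then OPT_U >= -(3n+2)/(n(n+1)), while every connected PROP1 allocation A satisfies UW(A) <= -n/(2(n+1)) - (n+2)/n^2. Hence the price of PROP1 with respect to utilitarian welfare for chores is Omega(n). -/
/-!
The agents other than `0` value every chore at `-1/(n+1)`, so the welfare of any connected
allocation is `-1` plus what agent `0` saves, `v₀(e) + 1/(n+1) ≤ 1/(n+1) - 2/n²`, on each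
chore it takes. Since every chore costs agent `0` at least `2/n²`, PROP1 lets it take at most
`n/2 + 1` chores, which bounds the welfare of PROP1 allocations. On the other hand, giving
agent `0` the first `n` chores and the last one to another agent has welfare
`-(3n+2)/(n(n+1))`.
-/

open Finset

noncomputable section

/-- A connected allocation of chores is PROP1 if every agent's bundle is either empty or
contains an item whose removal keeps the bundle connected and brings the agent's value
up to at least `-1/n`. -/
def Prop1Chores (n m : ℕ) (v : Fin n → Fin m → ℝ) (A : Fin n → Finset (Fin m)) : Prop :=
  ∀ i, A i = ∅ ∨ ∃ e ∈ A i, IsConnBundle (A i \ {e}) ∧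
    -(1 / (n : ℝ)) ≤ bundleVal (v i) (A i \ {e})

lemma bundleVal_le_card_mul {m : ℕ} {v : Fin m → ℝ} {S : Finset (Fin m)} {a : ℝ}
    (h : ∀ e ∈ S, v e ≤ a) : bundleVal v S ≤ #S * a := by
  simpa [bundleVal, nsmul_eq_mul] using sum_le_card_nsmul S v a h

lemma isConnBundle_iff_ordConnected {m : ℕ} {S : Finset (Fin m)} :
    IsConnBundle S ↔ (S : Set (Fin m)).OrdConnected := by
  simp only [IsConnBundle, Set.ordConnected_iff, Set.subset_def, Set.mem_Icc, Finset.mem_coe]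
  grind

def splitAlloc {n m : ℕ} (i j : Fin n) (a : Fin m) : Fin n → Finset (Fin m) :=
  fun k => if k = i then Iio a else if k = j then Ici a else ∅

lemma connAlloc_splitAlloc {n m : ℕ} {i j : Fin n} (hij : i ≠ j) (a : Fin m) :
    ConnAlloc n m (splitAlloc i j a) := by
  refine ⟨fun k => ?_, fun k l hkl => ?_, fun e => ?_⟩
  · rw [isConnBundle_iff_ordConnected, splitAlloc]
    split_ifs <;> simp [Set.ordConnected_Iio, Set.ordConnected_Ici, Set.ordConnected_empty]
  · simp only [splitAlloc]
    split_ifs <;> simp_all [Finset.disjoint_left]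
  · rcases lt_or_ge e a with h | h
    · exact ⟨i, by simp [splitAlloc, h]⟩
    · exact ⟨j, by simp [splitAlloc, hij.symm, h]⟩

lemma utilW_splitAlloc {n m : ℕ} (v : Fin n → Fin m → ℝ) {i j : Fin n} (hij : i ≠ j)
    (a : Fin m) :
    utilW n m v (splitAlloc i j a) = bundleVal (v i) (Iio a) + bundleVal (v j) (Ici a) := by
  rw [utilW, Fintype.sum_eq_add i j hij fun k hk => by simp [splitAlloc, hk.1, hk.2, bundleVal]]
  simp [splitAlloc, hij.symm]

lemma le_optU {n m : ℕ} (v : Fin n → Fin m → ℝ) {A : Fin n → Finset (Fin m)}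
    (hA : ConnAlloc n m A) : utilW n m v A ≤ optU n m v := by
  refine le_csSup ((Set.finite_range (utilW n m v)).bddAbove.mono ?_) ⟨A, hA, rfl⟩
  rintro _ ⟨B, -, rfl⟩
  exact ⟨B, rfl⟩

lemma sum_bundleVal_eq_of_partition {n m : ℕ} (w : Fin m → ℝ) {A : Fin n → Finset (Fin m)}
    (hdisj : ∀ i j, i ≠ j → Disjoint (A i) (A j)) (hcov : ∀ e, ∃ i, e ∈ A i) :
    ∑ i, bundleVal w (A i) = bundleVal w univ := by
  have hunion : univ.biUnion A = univ := eq_univ_of_forall fun e => by simpa using hcov e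
  rw [bundleVal, ← hunion, sum_biUnion fun i _ j _ hij => hdisj i j hij]
  rfl

lemma utilW_eq_of_forall_ne {n m : ℕ} {v : Fin n → Fin m → ℝ} {A : Fin n → Finset (Fin m)}
    (hA : ConnAlloc n m A) {i₀ : Fin n} {w : Fin m → ℝ} (hw : ∀ i ≠ i₀, v i = w) :
    utilW n m v A = bundleVal w univ + bundleVal (v i₀ - w) (A i₀) := by
  have hdev : ∀ i, bundleVal (v i) (A i) = bundleVal w (A i) + bundleVal (v i - w) (A i) := by
    intro i
    simp [bundleVal]
  rw [utilW, sum_congr rfl fun i _ => hdev i, sum_add_distrib,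
    sum_bundleVal_eq_of_partition w hA.2.1 hA.2.2,
    sum_eq_single i₀ fun i _ hi => by simp [hw i hi, bundleVal]]
  simp

lemma mul_card_sub_one_le_of_prop1 {n m : ℕ} {v : Fin n → Fin m → ℝ}
    {A : Fin n → Finset (Fin m)} (hP : Prop1Chores n m v A) (i : Fin n) {u : ℝ} (hu : 0 ≤ u)
    (hv : ∀ e, v i e ≤ -u) :
    u * (#(A i) - 1) ≤ 1 / n := by
  rcases hP i with hempty | ⟨e, he, -, hval⟩
  · simp only [hempty, card_empty, Nat.cast_zero]
    have : (0 : ℝ) ≤ 1 / n := by positivity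
    linarith
  · have hcost := bundleVal_le_card_mul (S := A i \ {e}) fun e _ => hv e
    rw [card_sdiff_of_subset (singleton_subset_iff.mpr he), card_singleton,
      Nat.cast_sub (card_pos.mpr ⟨e, he⟩)] at hcost
    push_cast at hcost
    linarith

section HardInstance

variable {n : ℕ}

def hardVal (n : ℕ) (i : Fin n) (j : Fin (n + 1)) : ℝ :=
  if (i : ℕ) = 0 then (if (j : ℕ) < n then -(2 / (n : ℝ) ^ 2) else -(((n : ℝ) - 2) / n))
  else -(1 / ((n : ℝ) + 1))

lemma hardVal_of_ne_zero {i : Fin n} (hi : (i : ℕ) ≠ 0) :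
    hardVal n i = fun _ => -(1 / ((n : ℝ) + 1)) :=
  funext fun _ => if_neg hi

lemma hardVal_of_lt_last {i : Fin n} (hi : (i : ℕ) = 0) {j : Fin (n + 1)} (hj : j < Fin.last n) :
    hardVal n i j = -(2 / (n : ℝ) ^ 2) := by
  rw [Fin.lt_def, Fin.val_last] at hj
  rw [hardVal, if_pos hi, if_pos hj]

lemma hardVal_le (hn : 4 ≤ n) {i : Fin n} (hi : (i : ℕ) = 0) (j : Fin (n + 1)) :
    hardVal n i j ≤ -(2 / (n : ℝ) ^ 2) := by
  have hn' : (4 : ℝ) ≤ n := by exact_mod_cast hn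
  rw [hardVal, if_pos hi]
  split_ifs
  · rfl
  · rw [neg_le_neg_iff, div_le_div_iff₀ (by positivity) (by positivity)]
    nlinarith

theorem le_optU_hardVal (hn : 2 ≤ n) :
    -((3 * (n : ℝ) + 2) / ((n : ℝ) * ((n : ℝ) + 1))) ≤ optU n (n + 1) (hardVal n) := by
  have hn' : (0 : ℝ) < n := by positivity
  set i₀ : Fin n := ⟨0, by omega⟩
  set i₁ : Fin n := ⟨1, by omega⟩
  have h₀₁ : i₀ ≠ i₁ := by simp [i₀, i₁, Fin.ext_iff]
  calc -((3 * (n : ℝ) + 2) / ((n : ℝ) * ((n : ℝ) + 1)))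
      = n * -(2 / (n : ℝ) ^ 2) + 1 * -(1 / ((n : ℝ) + 1)) := by field_simp; ring
    _ = utilW n (n + 1) (hardVal n) (splitAlloc i₀ i₁ (Fin.last n)) := by
      rw [utilW_splitAlloc _ h₀₁, bundleVal, bundleVal,
        sum_congr rfl fun j hj => hardVal_of_lt_last rfl (mem_Iio.mp hj),
        hardVal_of_ne_zero one_ne_zero]
      simp
    _ ≤ optU n (n + 1) (hardVal n) := le_optU _ (connAlloc_splitAlloc h₀₁ _)

theorem utilW_hardVal_le_of_prop1 (hn : 4 ≤ n) {A : Fin n → Finset (Fin (n + 1))}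
    (hA : ConnAlloc n (n + 1) A) (hP : Prop1Chores n (n + 1) (hardVal n) A) :
    utilW n (n + 1) (hardVal n) A ≤
      -((n : ℝ) / (2 * ((n : ℝ) + 1))) - ((n : ℝ) + 2) / (n : ℝ) ^ 2 := by
  have hn' : (4 : ℝ) ≤ n := by exact_mod_cast hn
  set i₀ : Fin n := ⟨0, by omega⟩
  set α : ℝ := 1 / ((n : ℝ) + 1) - 2 / (n : ℝ) ^ 2
  have hα : 0 ≤ α := by
    rw [sub_nonneg, div_le_div_iff₀ (by positivity) (by positivity)]
    nlinarith
  have hprop1 : 2 / (n : ℝ) ^ 2 * (#(A i₀) - 1) ≤ 1 / n :=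
    mul_card_sub_one_le_of_prop1 hP i₀ (by positivity) (hardVal_le hn rfl)
  have hcard : (#(A i₀) : ℝ) ≤ (n + 2) / 2 := by
    rw [div_mul_eq_mul_div, div_le_div_iff₀ (by positivity) (by positivity)] at hprop1
    nlinarith
  have hw : ∀ i ≠ i₀, hardVal n i = fun _ => -(1 / ((n : ℝ) + 1)) := fun i hi =>
    hardVal_of_ne_zero fun h => hi (Fin.ext h)
  calc utilW n (n + 1) (hardVal n) A
      = -1 + bundleVal (hardVal n i₀ - fun _ => -(1 / ((n : ℝ) + 1))) (A i₀) := by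
        rw [utilW_eq_of_forall_ne hA hw]
        congr 1
        simp only [bundleVal, sum_const, card_univ, Fintype.card_fin, nsmul_eq_mul]
        push_cast
        field_simp
    _ ≤ -1 + #(A i₀) * α := by
        gcongr
        refine bundleVal_le_card_mul fun j _ => ?_
        simp only [Pi.sub_apply, α]
        linarith [hardVal_le hn (i := i₀) rfl j]
    _ ≤ -1 + (n + 2) / 2 * α := by gcongr
    _ = -((n : ℝ) / (2 * ((n : ℝ) + 1))) - ((n : ℝ) + 2) / (n : ℝ) ^ 2 := by
        simp only [α]
        field_simp
        ring

end HardInstance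

theorem chores_utilitarian_prop1_lower_bound_general (n : ℕ) (hn : 4 ≤ n)
    (v : Fin n → Fin (n + 1) → ℝ)
    (hv1 : ∀ i : Fin n, (i : ℕ) = 0 → ∀ j : Fin (n + 1),
      v i j = if (j : ℕ) < n then -(2 / (n : ℝ) ^ 2) else -(((n : ℝ) - 2) / (n : ℝ)))
    (hv2 : ∀ i : Fin n, (i : ℕ) ≠ 0 → ∀ j : Fin (n + 1),
      v i j = -(1 / ((n : ℝ) + 1))) :
    -((3 * (n : ℝ) + 2) / ((n : ℝ) * ((n : ℝ) + 1))) ≤ optU n (n + 1) v ∧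
    ∀ A : Fin n → Finset (Fin (n + 1)), ConnAlloc n (n + 1) A →
      Prop1Chores n (n + 1) v A →
      utilW n (n + 1) v A ≤ -((n : ℝ) / (2 * ((n : ℝ) + 1))) - ((n : ℝ) + 2) / (n : ℝ) ^ 2 := by
  obtain rfl : v = hardVal n := funext₂ fun i j => by
    by_cases hi : (i : ℕ) = 0
    · rw [hv1 i hi, hardVal, if_pos hi]
    · rw [hv2 i hi, hardVal, if_neg hi]
  exact ⟨le_optU_hardVal (by omega), fun A hA hP => utilW_hardVal_le_of_prop1 hn hA hP⟩

/-- The hard instance for Chores | Utilitarian | PROP1: with `n ≥ 4`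
even agents and `n + 1` chores as described, `OPT_U ≥ -(3n+2)/(n(n+1))`, while every
connected PROP1 allocation has utilitarian welfare at most `-n/(2(n+1)) - (n+2)/n²`. -/
theorem chores_utilitarian_prop1_lower_bound (n : ℕ) (hn : 4 ≤ n) (hne : Even n)
    (v : Fin n → Fin (n + 1) → ℝ)
    (hv1 : ∀ i : Fin n, (i : ℕ) = 0 → ∀ j : Fin (n + 1),
      v i j = if (j : ℕ) < n then -(2 / (n : ℝ) ^ 2) else -(((n : ℝ) - 2) / (n : ℝ)))
    (hv2 : ∀ i : Fin n, (i : ℕ) ≠ 0 → ∀ j : Fin (n + 1),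
      v i j = -(1 / ((n : ℝ) + 1))) :
    -((3 * (n : ℝ) + 2) / ((n : ℝ) * ((n : ℝ) + 1))) ≤ optU n (n + 1) v ∧
    ∀ A : Fin n → Finset (Fin (n + 1)), ConnAlloc n (n + 1) A →
      Prop1Chores n (n + 1) v A →
      utilW n (n + 1) v A ≤ -((n : ℝ) / (2 * ((n : ℝ) + 1))) - ((n : ℝ) + 2) / (n : ℝ) ^ 2 :=
  chores_utilitarian_prop1_lower_bound_general n hn v hv1 hv2
end
end
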